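/- (Monotone decrease of the projected gradient iteration) Let A : ℓ² → Y be bounded linear with r := ‖A*A‖ < 1 and suppose ‖Az‖² ≤ (γr/2)‖z‖² for all z, with γ > 2β > 0. Let B be a closed convex subset of ℓ², D(x) = ½‖Ax − y^δ‖² − β‖x‖², and define x^{k+1} as the minimizer over B of the surrogate S(ω, x^k) = ½‖Aω − y^δ‖² − β‖ω‖² + (γ/2)‖x^k − ω‖² − ½‖A(ω − x^k)‖². Then D(x^{k+1}) ≤ S(x^{k+1}, x^k) ≤ S(x^k, x^k) = D(x^k), so the sequence D(x^k) is non-increasing. -/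
import Mathlib


/-- The objective `D(x) = ½‖Ax − y^δ‖² − β‖x‖²`. -/
noncomputable def Dfun {X Y : Type*} [NormedAddCommGroup X] [InnerProductSpace ℝ X]
    [NormedAddCommGroup Y] [InnerProductSpace ℝ Y]
    (A : X →L[ℝ] Y) (yδ : Y) (β : ℝ) (x : X) : ℝ :=
  (1 / 2) * ‖A x - yδ‖ ^ 2 - β * ‖x‖ ^ 2

/-- The surrogate `S(ω, ξ) = ½‖Aω − y^δ‖² − β‖ω‖² + (γ/2)‖ξ − ω‖² − ½‖A(ω − ξ)‖²`. -/
noncomputable def Sfun {X Y : Type*} [NormedAddCommGroup X] [InnerProductSpace ℝ X]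
    [NormedAddCommGroup Y] [InnerProductSpace ℝ Y]
    (A : X →L[ℝ] Y) (yδ : Y) (β γ : ℝ) (ω ξ : X) : ℝ :=
  (1 / 2) * ‖A ω - yδ‖ ^ 2 - β * ‖ω‖ ^ 2
    + (γ / 2) * ‖ξ - ω‖ ^ 2 - (1 / 2) * ‖A (ω - ξ)‖ ^ 2

/-- Monotone decrease of the projected-gradient/surrogate iteration (Lemma 5.7,
first part): with `r = ‖A*A‖ < 1`, `‖Az‖² ≤ (γr/2)‖z‖²`, `γ > 2β > 0`, and
`x^{k+1}` the minimizer over `B` of `ω ↦ S(ω, x^k)`, the chain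
`D(x^{k+1}) ≤ S(x^{k+1}, x^k) ≤ S(x^k, x^k) = D(x^k)` holds, so `D(x^k)` is
non-increasing. -/
theorem stmt_15 {Y : Type*} [NormedAddCommGroup Y] [InnerProductSpace ℝ Y]
    [CompleteSpace Y]
    (A : lp (fun _ : ℕ => ℝ) 2 →L[ℝ] Y) (yδ : Y) (β γ r : ℝ)
    (hr : r = ‖(ContinuousLinearMap.adjoint A).comp A‖) (hr1 : r < 1)
    (hA : ∀ z : lp (fun _ : ℕ => ℝ) 2, ‖A z‖ ^ 2 ≤ (γ * r / 2) * ‖z‖ ^ 2)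
    (hβ : 0 < β) (hγ : 2 * β < γ)
    (B : Set (lp (fun _ : ℕ => ℝ) 2)) (hcl : IsClosed B) (hconv : Convex ℝ B)
    (x : ℕ → lp (fun _ : ℕ => ℝ) 2) (hxB : ∀ k, x k ∈ B)
    (hmin : ∀ k, ∀ ω ∈ B, Sfun A yδ β γ (x (k + 1)) (x k) ≤ Sfun A yδ β γ ω (x k)) :
    (∀ k, Dfun A yδ β (x (k + 1)) ≤ Sfun A yδ β γ (x (k + 1)) (x k) ∧
      Sfun A yδ β γ (x (k + 1)) (x k) ≤ Sfun A yδ β γ (x k) (x k) ∧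
      Sfun A yδ β γ (x k) (x k) = Dfun A yδ β (x k)) ∧
    Antitone (fun k => Dfun A yδ β (x k)) := by
  have hγ0 : 0 < γ := lt_trans (by linarith) hγ
  have hr0 : 0 ≤ r := by rw [hr]; exact norm_nonneg _
  have key : ∀ k, Dfun A yδ β (x (k + 1)) ≤ Sfun A yδ β γ (x (k + 1)) (x k) ∧
      Sfun A yδ β γ (x (k + 1)) (x k) ≤ Sfun A yδ β γ (x k) (x k) ∧
      Sfun A yδ β γ (x k) (x k) = Dfun A yδ β (x k) := by
    intro k
    refine ⟨?_, hmin k (x k) (hxB k), ?_⟩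
    · have h1 := hA (x (k + 1) - x k)
      have h2 : ‖x k - x (k+1)‖ = ‖x (k+1) - x k‖ := norm_sub_rev _ _
      have h3 : γ * r / 2 * ‖x (k+1) - x k‖ ^ 2 ≤ γ / 2 * ‖x (k+1) - x k‖ ^ 2 := by
        apply mul_le_mul_of_nonneg_right _ (sq_nonneg _)
        nlinarith
      simp only [Dfun, Sfun, h2]
      nlinarith
    · simp [Sfun, Dfun, sub_self]
  refine ⟨key, antitone_nat_of_succ_le fun k => ?_⟩
  obtain ⟨h1, h2, h3⟩ := key k
  linarith
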